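/- Let S be a satisfiable IMS whose universal dependency graph has no cycle reachable from the root, and let q be a twig query. Then q is implied by S (every tree t with t ∈ L(S) satisfies t ⊨ q) if and only if there exists an embedding of q in the universal dependency graph G_S^∀ of S. -/
import Mathlib

set_option autoImplicit false

universe u v w

/-- An unordered word over an alphabet `σ`: a multiset over `σ`,
viewed as a function giving the number of occurrences of each symbol. -/
def UWord (σ : Type u) : Type u := σ → ℕ

/-- The empty unordered word `ε`. -/
def UWord.zero {σ : Type u} : UWord σ := fun _ => 0

/-- Unordered concatenation (multiset union) of two unordered words. -/
def UWord.add {σ : Type u} (w₁ w₂ : UWord σ) : UWord σ := fun a => w₁ a + w₂ a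

/-- The unordered word consisting of a single occurrence of `a`. -/
def UWord.single {σ : Type u} [DecidableEq σ] (a : σ) : UWord σ :=
  fun b => if b = a then 1 else 0

/-- Unordered concatenation of a list of unordered words. -/
def listSum {σ : Type u} (l : List (UWord σ)) : UWord σ := l.foldr UWord.add UWord.zero

/-- An interval multiplicity `[lo,hi]` (with `hi ∈ ℕ ∪ {∞}`), where the flag
`opt` marks the variant `[lo,hi]?` that additionally allows zero iterations. -/
structure Iv : Type where
  lo : ℕ
  hi : ℕ∞
  opt : Bool

/-- Membership of a number of iterations in the set denoted by an interval multiplicity. -/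
def Iv.Mem (I : Iv) (n : ℕ) : Prop :=
  (I.lo ≤ n ∧ (n : ℕ∞) ≤ I.hi) ∨ (I.opt = true ∧ n = 0)

/-- The multiplicity `1 = [1,1]`. -/
def Iv.one : Iv := ⟨1, 1, false⟩
/-- The multiplicity `? = [0,1]`. -/
def Iv.qmark : Iv := ⟨0, 1, false⟩
/-- The multiplicity `+ = [1,∞]`. -/
def Iv.iplus : Iv := ⟨1, ⊤, false⟩
/-- The multiplicity `* = [0,∞]`. -/
def Iv.istar : Iv := ⟨0, ⊤, false⟩

/-- An atom `(a₁^{I₁} || ⋯ || a_k^{I_k})`: a list of symbols, each with a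
multiplicity `1` (flag `true`) or `?` (flag `false`). -/
abbrev Atom (σ : Type u) : Type u := List (σ × Bool)

/-- A clause `(A₁^{I₁} | ⋯ | A_k^{I_k})`: a list of atoms with interval multiplicities. -/
abbrev Clause (σ : Type u) : Type u := List (Atom σ × Iv)

/-- A disjunctive interval multiplicity expression `(D₁^{I₁} || ⋯ || D_k^{I_k})`
(as raw syntax; well-formedness is `DIME.WF`). -/
structure DIME (σ : Type u) : Type u where
  clauses : List (Clause σ × Iv)

/-- Language of a single symbol with its multiplicity (`1` or `?`) inside an atom. -/
def atomEntryLang {σ : Type u} [DecidableEq σ] (p : σ × Bool) : Set (UWord σ) :=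
  if p.2 = true then {UWord.single p.1} else {UWord.single p.1, UWord.zero}

/-- Unordered concatenation of the languages of the items of a list. -/
def listConcLang {σ : Type u} {α : Type v} (f : α → Set (UWord σ)) :
    List α → Set (UWord σ)
  | [] => {UWord.zero}
  | x :: xs => {w | ∃ w₁ ∈ f x, ∃ w₂ ∈ listConcLang f xs, w = w₁.add w₂}

/-- The language of an atom. -/
def Atom.lang {σ : Type u} [DecidableEq σ] (A : Atom σ) : Set (UWord σ) :=
  listConcLang atomEntryLang A

/-- The language `L(E^I)` obtained by iterating a language `L` according to
an interval multiplicity `I`. -/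
def iterLang {σ : Type u} (L : Set (UWord σ)) (I : Iv) : Set (UWord σ) :=
  {w | (∃ l : List (UWord σ),
          (∀ x ∈ l, x ∈ L) ∧ I.lo ≤ l.length ∧ (l.length : ℕ∞) ≤ I.hi ∧ w = listSum l) ∨
       (I.opt = true ∧ w = UWord.zero)}

/-- The language of a clause: disjunction of its atoms with intervals. -/
def Clause.lang {σ : Type u} [DecidableEq σ] (D : Clause σ) : Set (UWord σ) :=
  {w | ∃ p ∈ D, w ∈ iterLang (Atom.lang p.1) p.2}

/-- The language of a DIME: the unordered concatenation of its clauses with intervals. -/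
def DIME.lang {σ : Type u} [DecidableEq σ] (E : DIME σ) : Set (UWord σ) :=
  listConcLang (fun p => iterLang (Clause.lang p.1) p.2) E.clauses

/-- A clause is simple if all its atoms carry multiplicity `1` or `?`. -/
def Clause.Simple {σ : Type u} (D : Clause σ) : Prop :=
  ∀ p ∈ D, p.2 = Iv.one ∨ p.2 = Iv.qmark

/-- The list of all symbol occurrences in a DIME. -/
def DIME.symbols {σ : Type u} (E : DIME σ) : List σ :=
  E.clauses.flatMap fun p => p.1.flatMap fun q => q.1.map Prod.fst

/-- Well-formedness of a DIME `(D₁^{I₁} || ⋯ || D_k^{I_k})`: each `D_i` is either a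
simple clause with `I_i ∈ {+,*}`, or a clause with `I_i ∈ {1,?}`; moreover no symbol
occurs twice in the whole expression. -/
def DIME.WF {σ : Type u} (E : DIME σ) : Prop :=
  (∀ p ∈ E.clauses,
      (Clause.Simple p.1 ∧ (p.2 = Iv.iplus ∨ p.2 = Iv.istar)) ∨
      (p.2 = Iv.one ∨ p.2 = Iv.qmark)) ∧
  E.symbols.Nodup

/-- An unordered tree: a finite set of nodes, a root, a labeling with symbols of `σ`,
and an acyclic parent–child relation in which every non-root node has exactly one
parent. -/
structure UTree (σ : Type u) (ν : Type v) : Type (max u v) where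
  nodes : Finset ν
  root : ν
  root_mem : root ∈ nodes
  lab : ν → σ
  child : ν → ν → Prop
  child_mem : ∀ {m n : ν}, child m n → m ∈ nodes ∧ n ∈ nodes
  parent_unique : ∀ n ∈ nodes, n ≠ root → ∃! m : ν, child m n
  acyclic : ∀ n : ν, ¬ Relation.TransGen child n n

/-- The unordered word of (labels of) children of a node of a tree. -/
noncomputable def UTree.childWord {σ : Type u} {ν : Type v} (t : UTree σ ν) (n : ν) :
    UWord σ :=
  fun a => {m : ν | t.child n m ∧ t.lab m = a}.ncard

/-- A twig query: a tree with labels in `σ ∪ {⋆}` (`none` is the wildcard `⋆`) and two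
disjoint edge relations, child edges and descendant edges. -/
structure Twig (σ : Type u) (ν : Type v) : Type (max u v) where
  nodes : Finset ν
  root : ν
  root_mem : root ∈ nodes
  lab : ν → Option σ
  child : ν → ν → Prop
  desc : ν → ν → Prop
  child_mem : ∀ {m n : ν}, child m n → m ∈ nodes ∧ n ∈ nodes
  desc_mem : ∀ {m n : ν}, desc m n → m ∈ nodes ∧ n ∈ nodes
  edges_disjoint : ∀ m n : ν, ¬(child m n ∧ desc m n)
  parent_unique : ∀ n ∈ nodes, n ≠ root → ∃! m : ν, (child m n ∨ desc m n)
  acyclic : ∀ n : ν, ¬ Relation.TransGen (fun x y => child x y ∨ desc x y) n n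

/-- `q.Sat t`, written `t ⊨ q`: there exists an embedding of the twig query `q`
in the tree `t`. -/
def Twig.Sat {σ : Type u} {ν : Type v} {μ : Type w} (q : Twig σ ν) (t : UTree σ μ) :
    Prop :=
  ∃ f : ν → μ,
    f q.root = t.root ∧
    (∀ n ∈ q.nodes, f n ∈ t.nodes) ∧
    (∀ m n : ν, q.child m n → t.child (f m) (f n)) ∧
    (∀ m n : ν, q.desc m n → Relation.TransGen t.child (f m) (f n)) ∧
    (∀ n ∈ q.nodes, q.lab n = none ∨ q.lab n = some (t.lab (f n)))

/-- Embedding of a tree `s` in a tree `t` (viewing `s` as a twig query with only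
child edges and no wildcards). -/
def UTree.EmbedsIn {σ : Type u} {ν : Type v} {μ : Type w} (s : UTree σ ν)
    (t : UTree σ μ) : Prop :=
  ∃ f : ν → μ,
    f s.root = t.root ∧
    (∀ n ∈ s.nodes, f n ∈ t.nodes) ∧
    (∀ m n : ν, s.child m n → t.child (f m) (f n)) ∧
    (∀ n ∈ s.nodes, s.lab n = t.lab (f n))

/-- A rooted directed graph with vertex set `σ`. -/
structure RGraph (σ : Type u) : Type u where
  root : σ
  edge : σ → σ → Prop

/-- `symbols∃(L)`: the symbols present in at least one unordered word of `L`. -/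
def symbolsE {σ : Type u} (L : Set (UWord σ)) : Set σ := {a | ∃ w ∈ L, w a ≠ 0}

/-- `symbols∀(L)`: the symbols present in every unordered word of `L`. -/
def symbolsA {σ : Type u} (L : Set (UWord σ)) : Set σ := {a | ∀ w ∈ L, w a ≠ 0}

/-- A simulation of a rooted directed graph `G` in a tree `t`. -/
def RGraph.SimulatesIn {σ : Type u} {ν : Type v} (G : RGraph σ) (t : UTree σ ν) : Prop :=
  ∃ R : σ → ν → Prop,
    R G.root t.root ∧
    (∀ a : σ, ∀ n : ν, R a n → n ∈ t.nodes) ∧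
    (∀ a : σ, ∀ n : ν, R a n → ∀ b : σ, G.edge a b → ∃ n' : ν, t.child n n' ∧ R b n') ∧
    (∀ a : σ, ∀ n : ν, R a n → t.lab n = a)

/-- The graph `G` has no cycle reachable from its root. -/
def RGraph.NoReachCycle {σ : Type u} (G : RGraph σ) : Prop :=
  ∀ a : σ, Relation.ReflTransGen G.edge G.root a → ¬ Relation.TransGen G.edge a a

/-- A path of `G`: a nonempty sequence of vertices starting at the root such that
consecutive vertices are joined by an edge of `G`. -/
def RGraph.IsPath {σ : Type u} (G : RGraph σ) (l : List σ) : Prop :=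
  l ≠ [] ∧ l.head? = some G.root ∧ l.Chain' G.edge

/-- `t` is the unfolding `u_G` of the graph `G`: its nodes are the paths of `G`,
its root is the one-element path, nodes `p` and `p·a` are joined by a child edge,
and each node is labeled by its last vertex. -/
def RGraph.IsUnfolding {σ : Type u} (G : RGraph σ) (t : UTree σ (List σ)) : Prop :=
  (∀ l : List σ, l ∈ t.nodes ↔ G.IsPath l) ∧
  t.root = [G.root] ∧
  (∀ p q : List σ, t.child p q ↔ (G.IsPath p ∧ G.IsPath q ∧ ∃ a : σ, q = p ++ [a])) ∧
  (∀ p ∈ t.nodes, t.lab p = p.getLastD G.root)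

/-- Embedding of a twig query `q` in a rooted directed graph `G`. -/
def Twig.SatGraph {σ : Type u} {ν : Type v} (q : Twig σ ν) (G : RGraph σ) : Prop :=
  ∃ f : ν → σ,
    f q.root = G.root ∧
    (∀ m n : ν, q.child m n → G.edge (f m) (f n)) ∧
    (∀ m n : ν, q.desc m n → Relation.TransGen G.edge (f m) (f n)) ∧
    (∀ n ∈ q.nodes, q.lab n = none ∨ q.lab n = some (f n))

/-- Embedding of a tree `t` (viewed as a twig query with only child edges)
in a rooted directed graph `G`. -/
def UTree.SatGraph {σ : Type u} {ν : Type v} (t : UTree σ ν) (G : RGraph σ) : Prop :=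
  ∃ f : ν → σ,
    f t.root = G.root ∧
    (∀ m n : ν, t.child m n → G.edge (f m) (f n)) ∧
    (∀ n ∈ t.nodes, t.lab n = f n)

/-- A schema: a designated root label together with a map from symbols to DIMEs.
(For a DIMS the rules are well-formed DIMEs — `Schema.WF`; for an IMS they are
moreover disjunction-free — `Schema.DisjFree`.) -/
structure Schema (σ : Type u) : Type u where
  root : σ
  rules : σ → DIME σ

/-- All rules of the schema are well-formed DIMEs. -/
def Schema.WF {σ : Type u} (S : Schema σ) : Prop := ∀ a : σ, (S.rules a).WF

/-- The schema is disjunction-free (an IMS): every clause of every rule consists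
of a single atom. -/
def Schema.DisjFree {σ : Type u} (S : Schema σ) : Prop :=
  ∀ a : σ, ∀ p ∈ (S.rules a).clauses, p.1.length = 1

/-- `S.Mem t`, written `t ∈ L(S)`: the root of `t` carries the root label of `S` and,
for every node, the unordered word of labels of its children belongs to the language
of the rule for the node's label. -/
def Schema.Mem {σ : Type u} [DecidableEq σ] {ν : Type v} (S : Schema σ)
    (t : UTree σ ν) : Prop :=
  t.lab t.root = S.root ∧ ∀ n ∈ t.nodes, t.childWord n ∈ DIME.lang (S.rules (t.lab n))

/-- The existential dependency graph `G_S^∃` of a schema `S`. -/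
def Schema.existGraph {σ : Type u} [DecidableEq σ] (S : Schema σ) : RGraph σ :=
  ⟨S.root, fun a b => b ∈ symbolsE (DIME.lang (S.rules a))⟩

/-- The universal dependency graph `G_S^∀` of a schema `S`. -/
def Schema.univGraph {σ : Type u} [DecidableEq σ] (S : Schema σ) : RGraph σ :=
  ⟨S.root, fun a b => b ∈ symbolsA (DIME.lang (S.rules a))⟩

section MinWitness
set_option linter.unusedSectionVars false
variable {σ : Type u} [DecidableEq σ]

lemma UWord.add_apply (w₁ w₂ : UWord σ) (a : σ) : (w₁.add w₂) a = w₁ a + w₂ a := rfl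

lemma UWord.zero_apply (a : σ) : (UWord.zero : UWord σ) a = 0 := rfl

lemma listSum_replicate (n : ℕ) (u : UWord σ) (b : σ) :
    listSum (List.replicate n u) b = n * u b := by
  induction n with
  | zero => simp [listSum, UWord.zero]
  | succ k ih =>
    simp only [List.replicate_succ, listSum, List.foldr_cons] at *
    show u b + _ = _
    rw [ih]; ring

lemma mem_listConcLang_cons {α : Type v} (f : α → Set (UWord σ)) (x : α) (xs : List α)
    (w : UWord σ) :
    w ∈ listConcLang f (x :: xs) ↔
      ∃ w₁ ∈ f x, ∃ w₂ ∈ listConcLang f xs, w = w₁.add w₂ := Iff.rfl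

lemma atom_min (A : Atom σ) :
    ∃ w ∈ Atom.lang A, ∀ b, w b ≠ 0 → ∀ v ∈ Atom.lang A, v b ≠ 0 := by
  induction A with
  | nil => exact ⟨UWord.zero, rfl, fun b hb => absurd rfl hb⟩
  | cons p rest ih =>
    obtain ⟨w2, hw2, hmin2⟩ := ih
    rcases p with ⟨a, bb⟩
    cases bb with
    | true =>
      refine ⟨(UWord.single a).add w2, ⟨UWord.single a, ?_, w2, hw2, rfl⟩, ?_⟩
      · simp [atomEntryLang]
      · intro b hb v hv
        obtain ⟨v1, hv1, v2, hv2, rfl⟩ := hv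
        simp only [atomEntryLang, if_pos rfl, Set.mem_singleton_iff] at hv1
        subst hv1
        rw [UWord.add_apply] at hb ⊢
        have : UWord.single a b ≠ 0 ∨ w2 b ≠ 0 := by omega
        rcases this with h1 | h2
        · simp only [UWord.single, ne_eq, ite_eq_right_iff, not_forall] at h1
          obtain ⟨rfl, -⟩ := h1
          simp [UWord.single]
        · have := hmin2 b h2 v2 hv2; omega
    | false =>
      refine ⟨UWord.zero.add w2, ⟨UWord.zero, ?_, w2, hw2, rfl⟩, ?_⟩
      · simp [atomEntryLang]
      · intro b hb v hv
        obtain ⟨v1, hv1, v2, hv2, rfl⟩ := hv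
        rw [UWord.add_apply] at hb ⊢
        rw [UWord.zero_apply] at hb
        have := hmin2 b (by omega) v2 hv2
        omega

lemma iter_min (L : Set (UWord σ)) (I : Iv) (hne : (iterLang L I).Nonempty)
    (hL : L.Nonempty → ∃ w ∈ L, ∀ b, w b ≠ 0 → ∀ v ∈ L, v b ≠ 0) :
    ∃ w ∈ iterLang L I, ∀ b, w b ≠ 0 → ∀ v ∈ iterLang L I, v b ≠ 0 := by
  by_cases hopt : I.opt = true
  · exact ⟨UWord.zero, Or.inr ⟨hopt, rfl⟩, fun b hb => absurd rfl hb⟩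
  by_cases hlo : I.lo = 0
  · refine ⟨UWord.zero, Or.inl ⟨[], by simp, by simp [hlo], by simp, rfl⟩,
      fun b hb => absurd rfl hb⟩
  -- I.lo ≥ 1, opt = false
  obtain ⟨v0, hv0⟩ := hne
  rcases hv0 with ⟨l0, hall0, hlen0, hlen0', rfl⟩ | ⟨h, -⟩
  swap; · exact absurd h hopt
  have hl0ne : l0 ≠ [] := by
    intro h; rw [h] at hlen0; simp at hlen0; omega
  obtain ⟨u0, hu0⟩ : ∃ u, u ∈ l0 := List.exists_mem_of_ne_nil l0 hl0ne
  obtain ⟨u, huL, humin⟩ := hL ⟨u0, hall0 u0 hu0⟩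
  refine ⟨listSum (List.replicate l0.length u),
    Or.inl ⟨List.replicate l0.length u, ?_, by simpa using hlen0, by simpa using hlen0', rfl⟩,
    ?_⟩
  · intro x hx; rw [List.eq_of_mem_replicate hx]; exact huL
  · intro b hb v hv
    rw [listSum_replicate] at hb
    have hub : u b ≠ 0 := by
      intro h; rw [h] at hb; simp at hb
    rcases hv with ⟨l', hall', hlen', -, rfl⟩ | ⟨h, -⟩
    swap; · exact absurd h hopt
    have : l' ≠ [] := by
      intro h; rw [h] at hlen'; simp at hlen'; omega
    obtain ⟨x, l'', rfl⟩ := List.exists_cons_of_ne_nil this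
    have hx : x b ≠ 0 := humin b hub x (hall' x (by simp))
    show x b + _ ≠ 0
    omega

lemma clause_min (D : Clause σ) (hD : D.length = 1) (hne : (Clause.lang D).Nonempty) :
    ∃ w ∈ Clause.lang D, ∀ b, w b ≠ 0 → ∀ v ∈ Clause.lang D, v b ≠ 0 := by
  obtain ⟨p, rfl⟩ : ∃ p, D = [p] := List.length_eq_one_iff.mp hD
  have hmem : ∀ w : UWord σ, w ∈ Clause.lang [p] ↔ w ∈ iterLang (Atom.lang p.1) p.2 := by
    intro w
    constructor
    · rintro ⟨p', hp', hw⟩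
      simp only [List.mem_singleton] at hp'; subst hp'; exact hw
    · intro hw; exact ⟨p, by simp, hw⟩
  have hne' : (iterLang (Atom.lang p.1) p.2).Nonempty := by
    obtain ⟨w, hw⟩ := hne; exact ⟨w, (hmem w).mp hw⟩
  obtain ⟨w, hw, hmin⟩ := iter_min (Atom.lang p.1) p.2 hne' (fun _ => atom_min p.1)
  exact ⟨w, (hmem w).mpr hw, fun b hb v hv => hmin b hb v ((hmem v).mp hv)⟩

lemma conc_min (cls : List (Clause σ × Iv)) (hDF : ∀ p ∈ cls, p.1.length = 1)
    (hne : (listConcLang (fun p => iterLang (Clause.lang p.1) p.2) cls).Nonempty) :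
    ∃ w ∈ listConcLang (fun p => iterLang (Clause.lang p.1) p.2) cls,
      ∀ b, w b ≠ 0 →
        ∀ v ∈ listConcLang (fun p => iterLang (Clause.lang p.1) p.2) cls, v b ≠ 0 := by
  induction cls with
  | nil => exact ⟨UWord.zero, rfl, fun b hb => absurd rfl hb⟩
  | cons p cls ih =>
    obtain ⟨w0, hw0⟩ := hne
    obtain ⟨w1, hw1, w2, hw2, rfl⟩ := hw0
    obtain ⟨w2', hw2', hmin2⟩ := ih (fun p hp => hDF p (by simp [hp])) ⟨w2, hw2⟩
    have hclne : (Clause.lang p.1).Nonempty → _ := clause_min p.1 (hDF p (by simp))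
    obtain ⟨w1', hw1', hmin1⟩ :=
      iter_min (Clause.lang p.1) p.2 ⟨w1, hw1⟩ hclne
    refine ⟨w1'.add w2', ⟨w1', hw1', w2', hw2', rfl⟩, ?_⟩
    intro b hb v hv
    obtain ⟨v1, hv1, v2, hv2, rfl⟩ := hv
    rw [UWord.add_apply] at hb ⊢
    have : w1' b ≠ 0 ∨ w2' b ≠ 0 := by omega
    rcases this with h | h
    · have := hmin1 b h v1 hv1; omega
    · have := hmin2 b h v2 hv2; omega

lemma dime_min (E : DIME σ) (hDF : ∀ p ∈ E.clauses, p.1.length = 1)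
    (hne : (DIME.lang E).Nonempty) :
    ∃ w ∈ DIME.lang E, ∀ b, w b ≠ 0 → ∀ v ∈ DIME.lang E, v b ≠ 0 :=
  conc_min E.clauses hDF hne

end MinWitness
section WF
variable {α : Type v}

lemma transGen_exists_step {r : α → α → Prop} {m n : α} (h : Relation.TransGen r m n) :
    ∃ y, r m y := by
  induction h with
  | single h => exact ⟨_, h⟩
  | tail _ _ ih => exact ih

lemma wf_of_finite_acyclic (r : α → α → Prop) (Nds : Finset α)
    (hmem : ∀ m n, r m n → m ∈ Nds ∧ n ∈ Nds)
    (hacyc : ∀ n, ¬ Relation.TransGen r n n) : WellFounded r := by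
  set rank : α → ℕ := fun n => {m | Relation.TransGen r m n}.ncard with hrank
  have hfin : ∀ n : α, {m | Relation.TransGen r m n}.Finite := by
    intro n
    apply Set.Finite.subset (Nds.finite_toSet)
    intro m hm
    obtain ⟨y, hy⟩ := transGen_exists_step hm
    exact (hmem m y hy).1
  have hdec : ∀ m n, r m n → rank m < rank n := by
    intro m n h
    have hsub : insert m {x | Relation.TransGen r x m} ⊆ {x | Relation.TransGen r x n} := by
      intro x hx
      rcases hx with rfl | hx
      · exact Relation.TransGen.single h
      · exact Relation.TransGen.tail hx h
    have hmm : m ∉ {x | Relation.TransGen r x m} := hacyc m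
    calc rank m < rank m + 1 := Nat.lt_succ_self _
      _ = (insert m {x | Relation.TransGen r x m}).ncard := by
          rw [Set.ncard_insert_of_notMem hmm (hfin m)]
      _ ≤ rank n := Set.ncard_le_ncard hsub (hfin n)
  exact Subrelation.wf (fun {m n} h => hdec m n h) (InvImage.wf rank Nat.lt_wfRel.wf)

end WF

section TreeNav
variable {σ : Type u} [DecidableEq σ] {μ : Type w}
set_option linter.unusedSectionVars false

/-- The query-edge relation of a twig. -/
def Twig.edge {ν : Type v} (q : Twig σ ν) : ν → ν → Prop :=
  fun m n => q.child m n ∨ q.desc m n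

lemma Twig.edge_wf {ν : Type v} (q : Twig σ ν) : WellFounded q.edge := by
  apply wf_of_finite_acyclic q.edge q.nodes _ q.acyclic
  intro m n h
  rcases h with h | h
  · exact ⟨(q.child_mem h).1, (q.child_mem h).2⟩
  · exact ⟨(q.desc_mem h).1, (q.desc_mem h).2⟩

lemma Twig.reach_root {ν : Type v} (q : Twig σ ν) :
    ∀ n ∈ q.nodes, Relation.ReflTransGen q.edge q.root n := by
  intro n
  induction n using q.edge_wf.induction with
  | _ n ih =>
    intro hn
    by_cases hroot : n = q.root
    · subst hroot; exact Relation.ReflTransGen.refl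
    · obtain ⟨p, hp, -⟩ := q.parent_unique n hn hroot
      have hpn : p ∈ q.nodes := by
        rcases hp with h | h
        · exact (q.child_mem h).1
        · exact (q.desc_mem h).1
      exact Relation.ReflTransGen.tail (ih p hp hpn) hp

lemma Twig.no_edge_into_root {ν : Type v} (q : Twig σ ν) (m : ν) : ¬ q.edge m q.root := by
  intro h
  have hm : m ∈ q.nodes := by
    rcases h with h' | h'
    · exact (q.child_mem h').1
    · exact (q.desc_mem h').1
  have := q.reach_root m hm
  exact q.acyclic q.root (Relation.TransGen.tail' this h)

end TreeNav
section SchemaNav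
variable {σ : Type u} [DecidableEq σ] {μ : Type w}
set_option linter.unusedSectionVars false

lemma exists_child (S : Schema σ) (t : UTree σ μ) (hMem : S.Mem t) {n : μ}
    (hn : n ∈ t.nodes) {b : σ} (hb : S.univGraph.edge (t.lab n) b) :
    ∃ m, t.child n m ∧ m ∈ t.nodes ∧ t.lab m = b := by
  have hw := hMem.2 n hn
  have hcb : t.childWord n b ≠ 0 := hb _ hw
  have hset : {m : μ | t.child n m ∧ t.lab m = b}.Nonempty := by
    by_contra h
    rw [Set.not_nonempty_iff_eq_empty] at h
    rw [UTree.childWord, h] at hcb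
    simp at hcb
  obtain ⟨m, hm1, hm2⟩ := hset
  exact ⟨m, hm1, (t.child_mem hm1).2, hm2⟩

lemma exists_desc (S : Schema σ) (t : UTree σ μ) (hMem : S.Mem t) :
    ∀ {a b : σ}, Relation.TransGen S.univGraph.edge a b →
      ∀ n ∈ t.nodes, t.lab n = a →
        ∃ m, Relation.TransGen t.child n m ∧ m ∈ t.nodes ∧ t.lab m = b := by
  intro a b h
  induction h with
  | single hab =>
    intro n hn hl
    obtain ⟨m, h1, h2, h3⟩ := exists_child S t hMem hn (hl ▸ hab)
    exact ⟨m, Relation.TransGen.single h1, h2, h3⟩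
  | tail hab hbc ih =>
    intro n hn hl
    obtain ⟨m, h1, h2, h3⟩ := ih n hn hl
    obtain ⟨m', g1, g2, g3⟩ := exists_child S t hMem h2 (h3 ▸ hbc)
    exact ⟨m', Relation.TransGen.tail h1 g1, g2, g3⟩

lemma reach_appears (S : Schema σ) (t : UTree σ μ) (hMem : S.Mem t) :
    ∀ {a : σ}, Relation.ReflTransGen S.univGraph.edge S.univGraph.root a →
      ∃ n ∈ t.nodes, t.lab n = a := by
  intro a h
  induction h with
  | refl => exact ⟨t.root, t.root_mem, hMem.1⟩
  | tail hab hbc ih =>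
    obtain ⟨n, hn, hl⟩ := ih
    obtain ⟨m, -, h2, h3⟩ := exists_child S t hMem hn (hl ▸ hbc)
    exact ⟨m, h2, h3⟩

lemma reach_lang_nonempty (S : Schema σ) (t : UTree σ μ) (hMem : S.Mem t)
    {a : σ} (h : Relation.ReflTransGen S.univGraph.edge S.univGraph.root a) :
    (DIME.lang (S.rules a)).Nonempty := by
  obtain ⟨n, hn, hl⟩ := reach_appears S t hMem h
  exact ⟨t.childWord n, hl ▸ hMem.2 n hn⟩

end SchemaNav
section Backward
variable {σ : Type u} [DecidableEq σ] {ν : Type v} {μ : Type w}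
set_option linter.unusedSectionVars false
set_option maxHeartbeats 1000000

theorem sat_of_satGraph (S : Schema σ) (q : Twig σ ν) (t : UTree σ μ)
    (hMem : S.Mem t) (hq : q.SatGraph S.univGraph) : q.Sat t := by
  classical
  obtain ⟨f, hf0, hfc, hfd, hfl⟩ := hq
  have hrootlab : t.lab t.root = f q.root := by
    rw [hf0]; exact hMem.1
  have key : ∀ k : ℕ, ∃ (D : Finset ν) (lam : ν → μ),
      D ⊆ q.nodes ∧ q.root ∈ D ∧ min k q.nodes.card ≤ D.card ∧
      (∀ m n, q.edge m n → n ∈ D → m ∈ D) ∧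
      lam q.root = t.root ∧
      (∀ n ∈ D, lam n ∈ t.nodes ∧ t.lab (lam n) = f n) ∧
      (∀ m n, q.child m n → n ∈ D → t.child (lam m) (lam n)) ∧
      (∀ m n, q.desc m n → n ∈ D → Relation.TransGen t.child (lam m) (lam n)) := by
    intro k
    induction k with
    | zero =>
      refine ⟨{q.root}, fun _ => t.root, ?_, Finset.mem_singleton_self _, by simp, ?_, rfl,
        ?_, ?_, ?_⟩
      · intro x hx; rw [Finset.mem_singleton] at hx; subst hx; exact q.root_mem
      · intro m n hmn hn
        rw [Finset.mem_singleton] at hn; subst hn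
        exact absurd hmn (q.no_edge_into_root m)
      · intro n hn
        rw [Finset.mem_singleton] at hn; subst hn
        exact ⟨t.root_mem, hrootlab⟩
      · intro m n hmn hn
        rw [Finset.mem_singleton] at hn; subst hn
        exact absurd (Or.inl hmn) (q.no_edge_into_root m)
      · intro m n hmn hn
        rw [Finset.mem_singleton] at hn; subst hn
        exact absurd (Or.inr hmn) (q.no_edge_into_root m)
    | succ k ih =>
      obtain ⟨D, lam, hsub, hrootD, hcard, hclosed, hlamroot, hgood, hchild, hdesc⟩ := ih
      by_cases hle : min (k+1) q.nodes.card ≤ D.card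
      · exact ⟨D, lam, hsub, hrootD, hle, hclosed, hlamroot, hgood, hchild, hdesc⟩
      have hDlt : D.card < q.nodes.card := by omega
      have hsd : (q.nodes \ D).Nonempty := by
        rw [← Finset.card_pos, Finset.card_sdiff_of_subset hsub]; omega
      obtain ⟨n₀, hn₀s, hn₀min⟩ :=
        (q.edge_wf.transGen).has_min ↑(q.nodes \ D) (by exact_mod_cast hsd)
      rw [Finset.mem_coe, Finset.mem_sdiff] at hn₀s
      obtain ⟨hn₀mem, hn₀D⟩ := hn₀s
      have hn₀root : n₀ ≠ q.root := fun h => hn₀D (h ▸ hrootD)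
      obtain ⟨p, hp, hpu⟩ := q.parent_unique n₀ hn₀mem hn₀root
      have hpmem : p ∈ q.nodes := by
        rcases hp with h | h
        · exact (q.child_mem h).1
        · exact (q.desc_mem h).1
      have hpD : p ∈ D := by
        by_contra hpD
        exact hn₀min p (by rw [Finset.mem_coe, Finset.mem_sdiff]; exact ⟨hpmem, hpD⟩)
          (Relation.TransGen.single hp)
      obtain ⟨hlampmem, hlamplab⟩ := hgood p hpD
      have hv : ∃ v, v ∈ t.nodes ∧ t.lab v = f n₀ ∧
          (q.child p n₀ → t.child (lam p) v) ∧
          (q.desc p n₀ → Relation.TransGen t.child (lam p) v) := by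
        rcases hp with hpc | hpd
        · obtain ⟨v, h1, h2, h3⟩ :=
            exists_child S t hMem hlampmem (b := f n₀) (by rw [hlamplab]; exact hfc p n₀ hpc)
          exact ⟨v, h2, h3, fun _ => h1, fun hd => absurd ⟨hpc, hd⟩ (q.edges_disjoint p n₀)⟩
        · obtain ⟨v, h1, h2, h3⟩ :=
            exists_desc S t hMem (hfd p n₀ hpd) (lam p) hlampmem hlamplab
          exact ⟨v, h2, h3, fun hc => absurd ⟨hc, hpd⟩ (q.edges_disjoint p n₀), fun _ => h1⟩
      obtain ⟨v, hvmem, hvlab, hvc, hvd⟩ := hv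
      refine ⟨insert n₀ D, Function.update lam n₀ v, ?_, Finset.mem_insert_of_mem hrootD,
        ?_, ?_, ?_, ?_, ?_, ?_⟩
      · intro x hx
        rcases Finset.mem_insert.mp hx with rfl | hx
        · exact hn₀mem
        · exact hsub hx
      · rw [Finset.card_insert_of_notMem hn₀D]; omega
      · intro m n hmn hn
        rcases Finset.mem_insert.mp hn with rfl | hn
        · have := hpu m hmn; subst this
          exact Finset.mem_insert_of_mem hpD
        · exact Finset.mem_insert_of_mem (hclosed m n hmn hn)
      · rw [Function.update_of_ne (show q.root ≠ n₀ from fun h => hn₀D (h ▸ hrootD)) _ _]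
        exact hlamroot
      · intro n hn
        rcases Finset.mem_insert.mp hn with rfl | hn
        · rw [Function.update_self]; exact ⟨hvmem, hvlab⟩
        · rw [Function.update_of_ne (show n ≠ n₀ from fun h => hn₀D (h ▸ hn)) _ _]
          exact hgood n hn
      · intro m n hmn hn
        rcases Finset.mem_insert.mp hn with rfl | hn
        · have := hpu m (Or.inl hmn); subst this
          rw [Function.update_self, Function.update_of_ne (show m ≠ n from fun h => hn₀D (h ▸ hpD)) _ _]
          exact hvc hmn
        · have hmD : m ∈ D := hclosed m n (Or.inl hmn) hn
          rw [Function.update_of_ne (show m ≠ n₀ from fun h => hn₀D (h ▸ hmD)) _ _,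
            Function.update_of_ne (show n ≠ n₀ from fun h => hn₀D (h ▸ hn)) _ _]
          exact hchild m n hmn hn
      · intro m n hmn hn
        rcases Finset.mem_insert.mp hn with rfl | hn
        · have := hpu m (Or.inr hmn); subst this
          rw [Function.update_self, Function.update_of_ne (show m ≠ n from fun h => hn₀D (h ▸ hpD)) _ _]
          exact hvd hmn
        · have hmD : m ∈ D := hclosed m n (Or.inr hmn) hn
          rw [Function.update_of_ne (show m ≠ n₀ from fun h => hn₀D (h ▸ hmD)) _ _,
            Function.update_of_ne (show n ≠ n₀ from fun h => hn₀D (h ▸ hn)) _ _]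
          exact hdesc m n hmn hn
  obtain ⟨D, lam, hsub, -, hcard, -, hlamroot, hgood, hchild, hdesc⟩ := key q.nodes.card
  have hDeq : D = q.nodes := Finset.eq_of_subset_of_card_le hsub (by omega)
  subst hDeq
  refine ⟨lam, hlamroot, fun n hn => (hgood n hn).1, ?_, ?_, ?_⟩
  · intro m n hmn; exact hchild m n hmn (q.child_mem hmn).2
  · intro m n hmn; exact hdesc m n hmn (q.desc_mem hmn).2
  · intro n hn
    rcases hfl n hn with h | h
    · exact Or.inl h
    · exact Or.inr (by rw [h, (hgood n hn).2])

end Backward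
section Canonical
variable {σ : Type u} [DecidableEq σ]
set_option linter.unusedSectionVars false

/-- Label of a path node in the canonical tree. -/
def canLab (S : Schema σ) (l : List (σ × ℕ)) : σ := (l.getLast?.map Prod.fst).getD S.root

/-- Validity of a path node in the canonical tree. -/
def canValid (S : Schema σ) (W : σ → UWord σ) (l : List (σ × ℕ)) : Prop :=
  ∀ p x, p ++ [x] <+: l → x.2 < W (canLab S p) x.1

lemma canLab_nil (S : Schema σ) : canLab S [] = S.root := rfl

lemma canLab_snoc (S : Schema σ) (l : List (σ × ℕ)) (x : σ × ℕ) :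
    canLab S (l ++ [x]) = x.1 := by
  simp [canLab]

lemma canValid_nil (S : Schema σ) (W : σ → UWord σ) : canValid S W [] := by
  rintro p x ⟨t, ht⟩
  exact absurd ht (by simp)

lemma prefix_snoc_iff {α : Type v} (s l : List α) (x : α) :
    s <+: l ++ [x] ↔ s <+: l ∨ s = l ++ [x] := by
  constructor
  · intro h
    rcases Nat.lt_or_ge s.length (l.length + 1) with hl | hl
    · exact Or.inl (List.prefix_of_prefix_length_le h ⟨[x], rfl⟩ (by omega))
    · have h2 := h.length_le
      simp only [List.length_append, List.length_singleton] at h2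
      exact Or.inr (List.IsPrefix.eq_of_length h (by simp; omega))
  · rintro (h | rfl)
    · exact h.trans ⟨[x], rfl⟩
    · exact List.prefix_refl _

lemma canValid_snoc (S : Schema σ) (W : σ → UWord σ) (l : List (σ × ℕ)) (x : σ × ℕ) :
    canValid S W (l ++ [x]) ↔ canValid S W l ∧ x.2 < W (canLab S l) x.1 := by
  constructor
  · intro h
    exact ⟨fun p y hpy => h p y (hpy.trans ⟨[x], rfl⟩), h l x (List.prefix_refl _)⟩
  · rintro ⟨h1, h2⟩ p y hpy
    rcases (prefix_snoc_iff _ _ _).mp hpy with h | h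
    · exact h1 p y h
    · obtain ⟨hp, hy⟩ := List.append_inj' h rfl
      obtain rfl : y = x := by simpa using hy
      subst hp
      exact h2

variable (S : Schema σ) (W : σ → UWord σ)
variable (hW : ∀ a, (DIME.lang (S.rules a)).Nonempty →
    W a ∈ DIME.lang (S.rules a) ∧ ∀ b, W a b ≠ 0 → ∀ v ∈ DIME.lang (S.rules a), v b ≠ 0)
variable (hNE : ∀ a, Relation.ReflTransGen S.univGraph.edge S.univGraph.root a →
    (DIME.lang (S.rules a)).Nonempty)

include hW hNE

lemma canValid_reach :
    ∀ l, canValid S W l → Relation.ReflTransGen S.univGraph.edge S.univGraph.root (canLab S l) := by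
  intro l
  induction l using List.reverseRecOn with
  | nil => intro _; exact Relation.ReflTransGen.refl
  | append_singleton l x ih =>
    intro h
    rw [canValid_snoc] at h
    have hreach := ih h.1
    have hWa := hW _ (hNE _ hreach)
    have hedge : S.univGraph.edge (canLab S l) x.1 := by
      intro v hv
      exact hWa.2 x.1 (by omega) v hv
    rw [canLab_snoc]
    exact hreach.tail hedge

lemma canValid_edge {l : List (σ × ℕ)} {x : σ × ℕ} (h : canValid S W (l ++ [x])) :
    S.univGraph.edge (canLab S l) x.1 := by
  rw [canValid_snoc] at h
  have hWa := hW _ (hNE _ (canValid_reach S W hW hNE l h.1))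
  intro v hv
  exact hWa.2 x.1 (by omega) v hv

end Canonical
section Rank
variable {σ : Type u} [DecidableEq σ] [Fintype σ]
set_option linter.unusedSectionVars false

/-- Rank of a vertex: number of its strict descendants in the universal graph. -/
noncomputable def grank (S : Schema σ) (a : σ) : ℕ :=
  {b | Relation.TransGen S.univGraph.edge a b}.ncard

lemma grank_lt (S : Schema σ) (hTrim : S.univGraph.NoReachCycle) {a b : σ}
    (ha : Relation.ReflTransGen S.univGraph.edge S.univGraph.root a)
    (hab : S.univGraph.edge a b) : grank S b < grank S a := by
  have hsub : insert b {c | Relation.TransGen S.univGraph.edge b c} ⊆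
      {c | Relation.TransGen S.univGraph.edge a c} := by
    intro c hc
    rcases hc with rfl | hc
    · exact Relation.TransGen.single hab
    · exact Relation.TransGen.head hab hc
  have hbb : b ∉ {c | Relation.TransGen S.univGraph.edge b c} :=
    hTrim b (ha.tail hab)
  calc grank S b < grank S b + 1 := Nat.lt_succ_self _
    _ = (insert b {c | Relation.TransGen S.univGraph.edge b c}).ncard := by
        rw [Set.ncard_insert_of_notMem hbb (Set.toFinite _)]; rfl
    _ ≤ grank S a := Set.ncard_le_ncard hsub (Set.toFinite _)

variable (S : Schema σ) (W : σ → UWord σ)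
variable (hW : ∀ a, (DIME.lang (S.rules a)).Nonempty →
    W a ∈ DIME.lang (S.rules a) ∧ ∀ b, W a b ≠ 0 → ∀ v ∈ DIME.lang (S.rules a), v b ≠ 0)
variable (hNE : ∀ a, Relation.ReflTransGen S.univGraph.edge S.univGraph.root a →
    (DIME.lang (S.rules a)).Nonempty)
variable (hTrim : S.univGraph.NoReachCycle)

include hW hNE hTrim

lemma canValid_length :
    ∀ l, canValid S W l → l.length + grank S (canLab S l) ≤ grank S S.root := by
  intro l
  induction l using List.reverseRecOn with
  | nil => intro _; simp [canLab_nil]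
  | append_singleton l x ih =>
    intro h
    have h' := (canValid_snoc S W l x).mp h
    have hIH := ih h'.1
    have hedge := canValid_edge S W hW hNE h
    have hreach := canValid_reach S W hW hNE l h'.1
    have hlt : grank S x.1 < grank S (canLab S l) := grank_lt S hTrim hreach hedge
    rw [canLab_snoc]
    simp only [List.length_append, List.length_singleton]
    omega

lemma canValid_finite : {l | canValid S W l}.Finite := by
  classical
  obtain ⟨M, hbound⟩ : ∃ M : ℕ, ∀ a b, W a b ≤ M := by
    refine ⟨Finset.univ.sup (fun a : σ => Finset.univ.sup (fun b : σ => W a b)), ?_⟩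
    intro a b
    calc W a b ≤ Finset.univ.sup (fun b : σ => W a b) :=
          Finset.le_sup (Finset.mem_univ b)
      _ ≤ _ := Finset.le_sup (f := fun a : σ => Finset.univ.sup fun b : σ => W a b)
          (Finset.mem_univ a)
  obtain ⟨N, hlen⟩ : ∃ N : ℕ, ∀ l, canValid S W l → l.length ≤ N := by
    refine ⟨grank S S.root, fun l hl => ?_⟩
    have := canValid_length S W hW hNE hTrim l hl
    omega
  have hsubset : {l | canValid S W l} ⊆
      (List.map (Prod.map id (Fin.val : Fin (M+1) → ℕ))) ''
        {l' : List (σ × Fin (M+1)) | l'.length ≤ N} := by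
    intro l hl
    have hx : ∀ x ∈ l, x.2 ≤ M := by
      intro x hx
      obtain ⟨s, t, rfl⟩ := List.append_of_mem hx
      have hpre : s ++ [x] <+: s ++ x :: t := ⟨t, by simp⟩
      have h1 := hl s x hpre
      have h2 := hbound (canLab S s) x.1
      omega
    refine ⟨l.map (fun x => (x.1, (⟨min x.2 M, by omega⟩ : Fin (M+1)))), ?_, ?_⟩
    · show _ ≤ N
      rw [List.length_map]
      exact hlen l hl
    · rw [List.map_map]
      have heq : ∀ x ∈ l, ((Prod.map id (Fin.val : Fin (M+1) → ℕ)) ∘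
          (fun x : σ × ℕ => (x.1, (⟨min x.2 M, by omega⟩ : Fin (M+1))))) x = x := by
        intro x hxl
        obtain ⟨a, i⟩ := x
        have hb : i ≤ M := hx (a, i) hxl
        simp [Prod.map, min_eq_left hb]
      calc l.map _ = l.map id := List.map_congr_left heq
        _ = l := List.map_id l
  exact Set.Finite.subset (Set.Finite.image _ (List.finite_length_le _ N)) hsubset

end Rank
section CanTree
variable {σ : Type u} [DecidableEq σ]
set_option linter.unusedSectionVars false

/-- The canonical tree of a schema. -/
noncomputable def canTree (S : Schema σ) (W : σ → UWord σ)
    (hfin : {l | canValid S W l}.Finite) : UTree σ (List (σ × ℕ)) where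
  nodes := hfin.toFinset
  root := []
  root_mem := by rw [Set.Finite.mem_toFinset]; exact canValid_nil S W
  lab := canLab S
  child := fun p q => canValid S W q ∧ ∃ x, q = p ++ [x]
  child_mem := by
    rintro m n ⟨hv, x, rfl⟩
    rw [Set.Finite.mem_toFinset, Set.Finite.mem_toFinset]
    exact ⟨((canValid_snoc S W m x).mp hv).1, hv⟩
  parent_unique := by
    intro n hn hroot
    rw [Set.Finite.mem_toFinset] at hn
    rcases List.eq_nil_or_concat n with rfl | ⟨l, x, hnx⟩
    · exact absurd rfl hroot
    · rw [List.concat_eq_append] at hnx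
      subst hnx
      refine ⟨l, ⟨hn, x, rfl⟩, ?_⟩
      rintro m ⟨-, y, hy⟩
      exact (List.append_inj' hy rfl).1.symm
  acyclic := by
    have mono : ∀ a b : List (σ × ℕ),
        Relation.TransGen (fun p q => canValid S W q ∧ ∃ x, q = p ++ [x]) a b →
          a.length < b.length := by
      intro a b h
      induction h with
      | single h => rcases h with ⟨-, x, rfl⟩; simp
      | tail _ h ih =>
        rcases h with ⟨-, x, rfl⟩
        rw [List.length_append, List.length_singleton]
        omega
    intro n h
    exact absurd (mono n n h) (lt_irrefl _)

variable (S : Schema σ) (W : σ → UWord σ)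
variable (hW : ∀ a, (DIME.lang (S.rules a)).Nonempty →
    W a ∈ DIME.lang (S.rules a) ∧ ∀ b, W a b ≠ 0 → ∀ v ∈ DIME.lang (S.rules a), v b ≠ 0)
variable (hNE : ∀ a, Relation.ReflTransGen S.univGraph.edge S.univGraph.root a →
    (DIME.lang (S.rules a)).Nonempty)
variable (hfin : {l | canValid S W l}.Finite)

include hW hNE

lemma canTree_childWord {l : List (σ × ℕ)} (hl : canValid S W l) :
    (canTree S W hfin).childWord l = W (canLab S l) := by
  funext b
  show {m | (canTree S W hfin).child l m ∧ (canTree S W hfin).lab m = b}.ncard = _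
  have hset : {m | (canTree S W hfin).child l m ∧ (canTree S W hfin).lab m = b} =
      (fun i => l ++ [(b, i)]) '' Set.Iio (W (canLab S l) b) := by
    ext m
    constructor
    · rintro ⟨⟨hv, x, rfl⟩, hlab⟩
      have hlab' : x.1 = b := by
        have := canLab_snoc S l x
        rw [show (canTree S W hfin).lab = canLab S from rfl] at hlab
        rw [this] at hlab
        exact hlab
      have h2 := ((canValid_snoc S W l x).mp hv).2
      refine ⟨x.2, ?_, ?_⟩
      · rw [← hlab']; exact h2
      · obtain ⟨a, i⟩ := x
        cases hlab'
        rfl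
    · rintro ⟨i, hi, rfl⟩
      refine ⟨⟨(canValid_snoc S W l (b, i)).mpr ⟨hl, hi⟩, ⟨(b, i), rfl⟩⟩, ?_⟩
      exact canLab_snoc S l (b, i)
  rw [hset]
  have hinj : Function.Injective (fun i : ℕ => l ++ [(b, i)]) := by
    intro i j hij
    have := List.append_inj_right hij rfl
    simpa using this
  rw [Set.ncard_image_of_injective _ hinj, ← Finset.coe_range, Set.ncard_coe_finset,
    Finset.card_range]

lemma canTree_mem : S.Mem (canTree S W hfin) := by
  refine ⟨rfl, ?_⟩
  intro n hn
  replace hn : canValid S W n := (Set.Finite.mem_toFinset hfin).mp hn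
  rw [show (canTree S W hfin).lab = canLab S from rfl,
    canTree_childWord S W hW hNE hfin hn]
  exact (hW _ (hNE _ (canValid_reach S W hW hNE n hn))).1

lemma canTree_child_edge {p p' : List (σ × ℕ)} (h : (canTree S W hfin).child p p') :
    S.univGraph.edge ((canTree S W hfin).lab p) ((canTree S W hfin).lab p') := by
  obtain ⟨hv, x, rfl⟩ := h
  rw [show (canTree S W hfin).lab = canLab S from rfl, canLab_snoc S p x]
  exact canValid_edge S W hW hNE hv

end CanTree
section Forward
set_option linter.unusedSectionVars false

theorem satGraph_of_imp {σ : Type} [DecidableEq σ] [Fintype σ] {ν : Type v}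
    (S : Schema σ) (hDF : S.DisjFree) (hSat : ∃ t₀ : UTree σ ℕ, S.Mem t₀)
    (hTrim : S.univGraph.NoReachCycle) (q : Twig σ ν)
    (hImp : ∀ (t : UTree σ (List (σ × ℕ))), S.Mem t → q.Sat t) :
    q.SatGraph S.univGraph := by
  classical
  obtain ⟨t₀, hMem₀⟩ := hSat
  have hWex : ∀ a : σ, ∃ w : UWord σ, (DIME.lang (S.rules a)).Nonempty →
      w ∈ DIME.lang (S.rules a) ∧ ∀ b, w b ≠ 0 → ∀ v ∈ DIME.lang (S.rules a), v b ≠ 0 := by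
    intro a
    by_cases h : (DIME.lang (S.rules a)).Nonempty
    · obtain ⟨w, hw, hmin⟩ := dime_min (S.rules a) (hDF a) h
      exact ⟨w, fun _ => ⟨hw, hmin⟩⟩
    · exact ⟨UWord.zero, fun h' => absurd h' h⟩
  choose W hW using hWex
  have hNE : ∀ a, Relation.ReflTransGen S.univGraph.edge S.univGraph.root a →
      (DIME.lang (S.rules a)).Nonempty := fun a h => reach_lang_nonempty S t₀ hMem₀ h
  have hfin := canValid_finite S W hW hNE hTrim
  obtain ⟨lam, hl0, hlmem, hlc, hld, hll⟩ :=
    hImp (canTree S W hfin) (canTree_mem S W hW hNE hfin)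
  refine ⟨fun n => canLab S (lam n), ?_, ?_, ?_, ?_⟩
  · show canLab S (lam q.root) = _
    rw [hl0]; rfl
  · intro m n hmn
    exact canTree_child_edge S W hW hNE hfin (hlc m n hmn)
  · intro m n hmn
    have key : ∀ p p', Relation.TransGen (canTree S W hfin).child p p' →
        Relation.TransGen S.univGraph.edge (canLab S p) (canLab S p') := by
      intro p p' h
      induction h with
      | single h => exact Relation.TransGen.single (canTree_child_edge S W hW hNE hfin h)
      | tail _ h ih => exact Relation.TransGen.tail ih (canTree_child_edge S W hW hNE hfin h)
    exact key _ _ (hld m n hmn)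
  · intro n hn
    rcases hll n hn with h | h
    · exact Or.inl h
    · exact Or.inr h

end Forward
/-- Let `S` be a satisfiable IMS whose universal dependency graph has
no cycle reachable from the root, and let `q` be a twig query.  Then `q` is implied by
`S` (every tree `t` with `t ∈ L(S)` satisfies `t ⊨ q`) if and only if there exists an
embedding of `q` in the universal dependency graph `G_S^∀` of `S`. -/
theorem statement19 {σ : Type} [DecidableEq σ] [Fintype σ]
    (S : Schema σ) (hWF : S.WF) (hDF : S.DisjFree)
    (hSat : ∃ t₀ : UTree σ ℕ, S.Mem t₀)
    (hTrim : S.univGraph.NoReachCycle)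
    {ν : Type} (q : Twig σ ν) :
    (∀ (μ : Type) (t : UTree σ μ), S.Mem t → q.Sat t) ↔ q.SatGraph S.univGraph := by
  constructor
  · intro hImp
    exact satGraph_of_imp S hDF hSat hTrim q (fun t hMem => hImp _ t hMem)
  · intro hq μ t hMem
    exact sat_of_satGraph S q t hMem hq
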